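/- For every n ≥ 1, the polynomials xy and x^n + y^n are algebraically independent over ℂ; consequently the invariant ring ℂ[x,y]^{D_{2n}} = ℂ[xy, x^n + y^n] is isomorphic as a ℂ-algebra to a polynomial ring in two variables (so the quotient variety ℂ²/D_{2n} is nonsingular). -/

import Mathlib

/-!
Over an algebraically closed field every `(a, b)` is `(s t, sⁿ + tⁿ)` for some `s, t`, so a
polynomial relation between `xy` and `xⁿ + yⁿ` vanishes everywhere and is zero.

`σ` multiplies the monomial `xᵃ yᵇ` by `ε ^ (a - b)`, so a `σ`-invariant polynomial only involves
monomials with `n ∣ a - b`. Averaging over `τ` writes a `D₂ₙ`-invariant polynomial as a combination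
of the `xᵃ yᵇ + xᵇ yᵃ = (xy)ᵇ (x^{nk} + y^{nk})`, and `x^{nk} + y^{nk}` is a polynomial in
`xy, xⁿ + yⁿ` by Newton's recurrence. Algebraic independence then identifies `ℂ[xy, xⁿ + yⁿ]` with
a polynomial ring.
-/

open MvPolynomial

/-- The algebra automorphism `σ : x ↦ εx, y ↦ ε⁻¹y` of `ℂ[x,y]`. -/
noncomputable def sigmaA (ε : ℂ) : MvPolynomial (Fin 2) ℂ →ₐ[ℂ] MvPolynomial (Fin 2) ℂ :=
  aeval ![C ε * X 0, C ε⁻¹ * X 1]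

/-- The algebra automorphism `τ : x ↦ y, y ↦ x` of `ℂ[x,y]`. -/
noncomputable def tauA : MvPolynomial (Fin 2) ℂ →ₐ[ℂ] MvPolynomial (Fin 2) ℂ :=
  aeval ![X 1, X 0]

theorem algebraicIndependent_of_surjective_eval {K σ ι : Type*} [CommRing K] [IsDomain K]
    [Infinite K] {g : ι → MvPolynomial σ K}
    (hg : Function.Surjective fun (x : σ → K) (i : ι) ↦ eval x (g i)) :
    AlgebraicIndependent K g := by
  refine algebraicIndependent_iff.mpr fun p hp ↦ MvPolynomial.funext fun v ↦ ?_
  obtain ⟨x, rfl⟩ := hg v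
  have h := congrArg (aeval x) hp
  rw [← AlgHom.comp_apply, comp_aeval, map_zero] at h
  simpa [coe_aeval_eq_eval] using h

theorem exists_mul_eq_and_pow_add_pow_eq {K : Type*} [Field K] [IsAlgClosed K] {n : ℕ}
    (hn : 0 < n) (a b : K) : ∃ s t : K, s * t = a ∧ s ^ n + t ^ n = b := by
  -- `s ^ n` and `t ^ n` must be the two roots of `Z ^ 2 - b Z + a ^ n`
  have hdeg :
      (Polynomial.X ^ 2 - Polynomial.C b * Polynomial.X + Polynomial.C (a ^ n)).degree = 2 := by
    compute_degree!
  obtain ⟨u, hu⟩ := IsAlgClosed.exists_root _ (hdeg ▸ two_ne_zero)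
  have hroots : u * (b - u) = a ^ n := by
    simp only [Polynomial.IsRoot, Polynomial.eval_add, Polynomial.eval_sub, Polynomial.eval_pow,
      Polynomial.eval_mul, Polynomial.eval_C, Polynomial.eval_X] at hu
    linear_combination -hu
  obtain ⟨s, rfl⟩ := IsAlgClosed.exists_pow_nat_eq u hn
  by_cases hs : s = 0
  · obtain ⟨r, hr⟩ := IsAlgClosed.exists_pow_nat_eq b hn
    have ha : a = 0 := pow_eq_zero_iff hn.ne' |>.mp (by simp [← hroots, hs, hn.ne'])
    exact ⟨r, 0, by simp [ha], by simp [hr, hn.ne']⟩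
  · refine ⟨s, a / s, by field_simp, ?_⟩
    rw [div_pow, ← hroots]
    field_simp
    ring

theorem algebraicIndependent_X_mul_X_X_pow_add_X_pow {K : Type*} [Field K] [IsAlgClosed K]
    {n : ℕ} (hn : 0 < n) :
    AlgebraicIndependent K ![(X 0 * X 1 : MvPolynomial (Fin 2) K), X 0 ^ n + X 1 ^ n] := by
  refine algebraicIndependent_of_surjective_eval fun v ↦ ?_
  obtain ⟨s, t, hst, hsum⟩ := exists_mul_eq_and_pow_add_pow_eq hn (v 0) (v 1)
  exact ⟨![s, t], funext fun i ↦ by fin_cases i <;> simp [hst, hsum]⟩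

section Adjoin

variable {R : Type*} [CommRing R] (n : ℕ)

theorem X_pow_add_X_pow_mem_adjoin (k : ℕ) :
    (X 0 : MvPolynomial (Fin 2) R) ^ (n * k) + X 1 ^ (n * k) ∈
      Algebra.adjoin R {X 0 * X 1, X 0 ^ n + X 1 ^ n} := by
  induction k using Nat.twoStepInduction with
  | zero => simpa using add_mem (one_mem _) (one_mem _)
  | one => simpa using Algebra.subset_adjoin (by simp)
  | more k ih ih₁ =>
    have hrec : (X 0 : MvPolynomial (Fin 2) R) ^ (n * (k + 2)) + X 1 ^ (n * (k + 2)) =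
        (X 0 ^ n + X 1 ^ n) * (X 0 ^ (n * (k + 1)) + X 1 ^ (n * (k + 1)))
          - (X 0 * X 1) ^ n * (X 0 ^ (n * k) + X 1 ^ (n * k)) := by
      ring
    rw [hrec]
    exact sub_mem (mul_mem (Algebra.subset_adjoin (by simp)) ih₁)
      (mul_mem (pow_mem (Algebra.subset_adjoin (by simp)) n) ih)

theorem X_pow_mul_X_pow_add_X_pow_mul_X_pow_mem_adjoin {a b : ℕ} (h : (n : ℤ) ∣ a - b) :
    (X 0 : MvPolynomial (Fin 2) R) ^ a * X 1 ^ b + X 0 ^ b * X 1 ^ a ∈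
      Algebra.adjoin R {X 0 * X 1, X 0 ^ n + X 1 ^ n} := by
  wlog hba : b ≤ a generalizing a b
  · rw [add_comm (X 0 ^ a * X 1 ^ b)]
    exact this (by rwa [← neg_sub, dvd_neg]) (by omega)
  rw [← Nat.cast_sub hba, Int.natCast_dvd_natCast] at h
  obtain ⟨k, hk⟩ := h
  obtain rfl : a = b + n * k := by omega
  have hfactor :
      (X 0 : MvPolynomial (Fin 2) R) ^ (b + n * k) * X 1 ^ b + X 0 ^ b * X 1 ^ (b + n * k) =
        (X 0 * X 1) ^ b * (X 0 ^ (n * k) + X 1 ^ (n * k)) := by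
    ring
  rw [hfactor]
  exact mul_mem (pow_mem (Algebra.subset_adjoin (by simp)) b) (X_pow_add_X_pow_mem_adjoin n k)

end Adjoin

theorem monomial_eq_C_mul_X_pow_mul_X_pow {R : Type*} [CommSemiring R] (d : Fin 2 →₀ ℕ) (c : R) :
    monomial d c = C c * (X 0 ^ d 0 * X 1 ^ d 1) := by
  rw [monomial_eq, Finsupp.prod_fintype _ _ (by simp), Fin.prod_univ_two]

theorem sigmaA_monomial (ε : ℂ) (d : Fin 2 →₀ ℕ) (c : ℂ) :
    sigmaA ε (monomial d c) = monomial d (ε ^ d 0 * ε⁻¹ ^ d 1 * c) := by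
  simp only [monomial_eq_C_mul_X_pow_mul_X_pow, sigmaA, map_mul, map_pow, aeval_C, aeval_X,
    algebraMap_eq, Matrix.cons_val_zero, Matrix.cons_val_one, mul_pow]
  ring

theorem tauA_monomial (d : Fin 2 →₀ ℕ) (c : ℂ) :
    tauA (monomial d c) = C c * (X 0 ^ d 1 * X 1 ^ d 0) := by
  simp only [monomial_eq_C_mul_X_pow_mul_X_pow, tauA, map_mul, map_pow, aeval_C, aeval_X,
    algebraMap_eq, Matrix.cons_val_zero, Matrix.cons_val_one]
  ring

theorem coeff_sigmaA (ε : ℂ) (f : MvPolynomial (Fin 2) ℂ) (d : Fin 2 →₀ ℕ) :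
    coeff d (sigmaA ε f) = ε ^ d 0 * ε⁻¹ ^ d 1 * coeff d f := by
  induction f using MvPolynomial.induction_on' with
  | monomial e c =>
    rw [sigmaA_monomial, coeff_monomial, coeff_monomial]
    split_ifs with h
    · rw [h]
    · rw [mul_zero]
  | add f g hf hg => rw [map_add, coeff_add, coeff_add, hf, hg, mul_add]

theorem dvd_sub_of_mem_support_of_sigmaA_eq {n : ℕ} (hn : 0 < n) {ε : ℂ} (hε : IsPrimitiveRoot ε n)
    {f : MvPolynomial (Fin 2) ℂ} (hf : sigmaA ε f = f) {d : Fin 2 →₀ ℕ} (hd : d ∈ f.support) :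
    (n : ℤ) ∣ d 0 - d 1 := by
  rw [← hε.zpow_eq_one_iff_dvd, zpow_sub₀ (hε.ne_zero hn.ne'), zpow_natCast, zpow_natCast,
    div_eq_mul_inv, ← inv_pow]
  have h := congrArg (coeff d) hf
  rw [coeff_sigmaA] at h
  exact mul_right_cancel₀ (mem_support_iff.mp hd) (h.trans (one_mul _).symm)

theorem mem_adjoin_of_sigmaA_eq_of_tauA_eq {n : ℕ} (hn : 0 < n) {ε : ℂ}
    (hε : IsPrimitiveRoot ε n) {f : MvPolynomial (Fin 2) ℂ} (hσ : sigmaA ε f = f)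
    (hτ : tauA f = f) : f ∈ Algebra.adjoin ℂ {X 0 * X 1, X 0 ^ n + X 1 ^ n} := by
  have hsum : f + tauA f = ∑ d ∈ f.support,
      C (coeff d f) * (X 0 ^ d 0 * X 1 ^ d 1 + X 0 ^ d 1 * X 1 ^ d 0) := by
    rw [← Finset.sum_congr rfl fun d _ ↦ by
      rw [mul_add, ← monomial_eq_C_mul_X_pow_mul_X_pow, ← tauA_monomial],
      Finset.sum_add_distrib, ← map_sum, ← as_sum]
  -- average over `τ`, using that `2` is invertible in `ℂ`
  have hf : f = (2⁻¹ : ℂ) • (f + tauA f) := by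
    rw [hτ, ← two_smul ℂ f, smul_smul, inv_mul_cancel₀ two_ne_zero, one_smul]
  rw [hf, hsum]
  refine Subalgebra.smul_mem _ (sum_mem fun d hd ↦ mul_mem (Subalgebra.algebraMap_mem _ _) ?_) _
  exact X_pow_mul_X_pow_add_X_pow_mul_X_pow_mem_adjoin n
    (dvd_sub_of_mem_support_of_sigmaA_eq hn hε hσ hd)

theorem adjoin_le_equalizer_sigmaA_inf_equalizer_tauA {n : ℕ} (hn : 0 < n) {ε : ℂ}
    (hε : IsPrimitiveRoot ε n) :
    Algebra.adjoin ℂ {X 0 * X 1, X 0 ^ n + X 1 ^ n} ≤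
      AlgHom.equalizer (sigmaA ε) (AlgHom.id ℂ (MvPolynomial (Fin 2) ℂ)) ⊓
        AlgHom.equalizer tauA (AlgHom.id ℂ (MvPolynomial (Fin 2) ℂ)) := by
  rw [Algebra.adjoin_le_iff, Set.insert_subset_iff, Set.singleton_subset_iff]
  simp only [SetLike.mem_coe, Algebra.mem_inf, AlgHom.mem_equalizer, AlgHom.id_apply, sigmaA, tauA,
    map_mul, map_add, map_pow, aeval_X, Matrix.cons_val_zero, Matrix.cons_val_one]
  refine ⟨⟨?_, mul_comm _ _⟩, ?_, add_comm _ _⟩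
  · rw [mul_mul_mul_comm, ← C_mul, mul_inv_cancel₀ (hε.ne_zero hn.ne'), C_1, one_mul]
  · rw [mul_pow, mul_pow, ← C_pow, ← C_pow, inv_pow, hε.pow_eq_one, inv_one, C_1, one_mul, one_mul]

/-- `xy` and `xⁿ + yⁿ` are algebraically independent over `ℂ`, and the
invariant ring `ℂ[x,y]^{D_{2n}} = ℂ[xy, xⁿ + yⁿ]` is isomorphic as a `ℂ`-algebra to a
polynomial ring in two variables. -/
theorem dihedral_invariant_ring_polynomial (n : ℕ) (hn : 1 ≤ n) (ε : ℂ)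
    (hε : IsPrimitiveRoot ε n) :
    AlgebraicIndependent ℂ
      ![(X 0 * X 1 : MvPolynomial (Fin 2) ℂ), X 0 ^ n + X 1 ^ n] ∧
    AlgHom.equalizer (sigmaA ε) (AlgHom.id ℂ (MvPolynomial (Fin 2) ℂ)) ⊓
        AlgHom.equalizer tauA (AlgHom.id ℂ (MvPolynomial (Fin 2) ℂ)) =
      Algebra.adjoin ℂ {(X 0 * X 1 : MvPolynomial (Fin 2) ℂ), X 0 ^ n + X 1 ^ n} ∧
    Nonempty
      ((Algebra.adjoin ℂ {(X 0 * X 1 : MvPolynomial (Fin 2) ℂ), X 0 ^ n + X 1 ^ n}) ≃ₐ[ℂ]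
        MvPolynomial (Fin 2) ℂ) := by
  have hindep := algebraicIndependent_X_mul_X_X_pow_add_X_pow (K := ℂ) hn
  refine ⟨hindep, le_antisymm (fun f hf ↦ ?_) (adjoin_le_equalizer_sigmaA_inf_equalizer_tauA hn hε),
    ⟨Matrix.range_cons_cons_empty _ _ _ ▸ hindep.aevalEquiv.symm⟩⟩
  rw [Algebra.mem_inf, AlgHom.mem_equalizer, AlgHom.mem_equalizer] at hf
  exact mem_adjoin_of_sigmaA_eq_of_tauA_eq hn hε hf.1 hf.2
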